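/- arXiv:2303.02419 — 2 statements merged into one kernel-verified Lean document; each statement's English description precedes it below -/
import Mathlib

section
/- Let 0 < p_cl < 1/2 be a real number, let w_0 ≥ 1 be a natural number, and set w_i = 2^i · w_0 for each i ∈ ℕ. Then for any real p, the total stationary mass of the non-idle states, namely S = ∑_{i=0}^∞ [ p·p_cl^i + ∑_{j=1}^{w_i - 1} p·(w_i − j)·p_cl^i / (w_i·(1 − p_cl)) ], converges and equals p·(4·p_cl² − (w_0 + 4)·p_cl + w_0 + 1) / (2·(1 − p_cl)²·(1 − 2·p_cl)). Equivalently, the idle probability b_idle = 1 − S equals 1 − p·(4·p_cl² − (w_0 + 4)·p_cl + w_0 + 1) / (2·(1 − p_cl)²·(1 − 2·p_cl)). -/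
/-!
Write `q = p_cl`. By Gauss's summation `∑_{j=1}^{w-1} (w - j) = w (w - 1) / 2`, the mass of
back-off stage `i` is `p q^i (1 + (w_i - 1) / (2 (1 - q)))`. Since `w_i = 2^i w₀`, this splits
into two geometric series, of ratios `q` and `2q`; the second converges because `q < 1/2`.
-/

open Finset

lemma sum_Icc_one_natCast (n : ℕ) : ∑ j ∈ Icc 1 n, (j : ℝ) = n * (n + 1) / 2 := by
  induction n with
  | zero => simp
  | succ n ih =>
    rw [sum_Icc_succ_top (by omega), ih]
    push_cast
    ring

lemma sum_Icc_one_natCast_sub (w : ℕ) :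
    ∑ j ∈ Icc 1 (w - 1), ((w : ℝ) - j) = w * (w - 1) / 2 := by
  rcases Nat.eq_zero_or_pos w with rfl | hw
  · simp
  rw [sum_sub_distrib, sum_const, Nat.card_Icc, sum_Icc_one_natCast, nsmul_eq_mul,
    Nat.sub_add_cancel hw, Nat.cast_sub hw]
  push_cast
  ring

lemma sum_Icc_mul_natCast_sub_div (a b c : ℝ) {w : ℕ} (hw : w ≠ 0) :
    ∑ j ∈ Icc 1 (w - 1), a * ((w : ℝ) - j) * b / (w * c) = a * b * (w - 1) / (2 * c) := by
  have hw' : (w : ℝ) ≠ 0 := Nat.cast_ne_zero.mpr hw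
  calc ∑ j ∈ Icc 1 (w - 1), a * ((w : ℝ) - j) * b / (w * c)
      = a * b / (w * c) * ∑ j ∈ Icc 1 (w - 1), ((w : ℝ) - j) := by
        rw [mul_sum]
        exact sum_congr rfl fun j _ => by ring
    _ = a * b * (w - 1) / (2 * c) := by
        rw [sum_Icc_one_natCast_sub]
        field_simp

lemma backoff_stage_mass (p q : ℝ) (hq : q ≠ 1) {w0 : ℕ} (hw0 : w0 ≠ 0) (i : ℕ) :
    p * q ^ i +
        ∑ j ∈ Icc 1 (2 ^ i * w0 - 1),
          p * ((2 : ℝ) ^ i * (w0 : ℝ) - (j : ℝ)) * q ^ i / (((2 : ℝ) ^ i * (w0 : ℝ)) * (1 - q)) =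
      p / (2 * (1 - q)) * ((1 - 2 * q) * q ^ i + w0 * (2 * q) ^ i) := by
  have hq' : 1 - q ≠ 0 := sub_ne_zero.mpr hq.symm
  have hsum := sum_Icc_mul_natCast_sub_div p (q ^ i) (1 - q) (w := 2 ^ i * w0) (by positivity)
  push_cast at hsum
  rw [hsum, mul_pow]
  field_simp
  ring

lemma hasSum_backoff_mass (p q : ℝ) (hq0 : 0 ≤ q) (hq : q < 1 / 2) {w0 : ℕ} (hw0 : w0 ≠ 0) :
    HasSum
      (fun i : ℕ =>
        p * q ^ i +
          ∑ j ∈ Icc 1 (2 ^ i * w0 - 1),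
            p * ((2 : ℝ) ^ i * (w0 : ℝ) - (j : ℝ)) * q ^ i / (((2 : ℝ) ^ i * (w0 : ℝ)) * (1 - q)))
      (p * (4 * q ^ 2 - ((w0 : ℝ) + 4) * q + (w0 : ℝ) + 1) / (2 * (1 - q) ^ 2 * (1 - 2 * q))) := by
  have hq1 : 1 - q ≠ 0 := by linarith
  have hq2 : 1 - 2 * q ≠ 0 := by linarith
  have hgeom := hasSum_geometric_of_lt_one hq0 (by linarith : q < 1)
  have hgeom2 := hasSum_geometric_of_lt_one (by positivity : 0 ≤ 2 * q) (by linarith : 2 * q < 1)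
  have hsplit := (((hgeom.mul_left (1 - 2 * q)).add (hgeom2.mul_left (w0 : ℝ))).mul_left
    (p / (2 * (1 - q)))).congr_fun (backoff_stage_mass p q (by linarith) hw0)
  have hvalue : p / (2 * (1 - q)) * ((1 - 2 * q) * (1 - q)⁻¹ + w0 * (1 - 2 * q)⁻¹) =
      p * (4 * q ^ 2 - ((w0 : ℝ) + 4) * q + w0 + 1) / (2 * (1 - q) ^ 2 * (1 - 2 * q)) := by
    field_simp
    ring
  exact hvalue ▸ hsplit

/-- Proposition 1 (normalization): with `0 < p_cl < 1/2`, `w₀ ≥ 1`, and `wᵢ = 2^i·w₀`,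
the total stationary mass of the non-idle states
`S = ∑_{i=0}^∞ [ p·p_cl^i + ∑_{j=1}^{wᵢ-1} p·(wᵢ−j)·p_cl^i/(wᵢ·(1−p_cl)) ]`
converges and equals `p·(4·p_cl² − (w₀+4)·p_cl + w₀ + 1)/(2·(1−p_cl)²·(1−2·p_cl))`;
equivalently the idle probability `b_idle = 1 − S` equals one minus that closed form. -/
theorem csma_stationary_normalization
    (p_cl : ℝ) (hcl0 : 0 < p_cl) (hcl2 : p_cl < 1 / 2)
    (w0 : ℕ) (hw0 : 1 ≤ w0) (p : ℝ) :
    HasSum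
      (fun i : ℕ =>
        p * p_cl ^ i +
          ∑ j ∈ Finset.Icc 1 (2 ^ i * w0 - 1),
            p * ((2 : ℝ) ^ i * (w0 : ℝ) - (j : ℝ)) * p_cl ^ i /
              (((2 : ℝ) ^ i * (w0 : ℝ)) * (1 - p_cl)))
      (p * (4 * p_cl ^ 2 - ((w0 : ℝ) + 4) * p_cl + (w0 : ℝ) + 1) /
        (2 * (1 - p_cl) ^ 2 * (1 - 2 * p_cl))) ∧
    1 - ∑' i : ℕ,
        (p * p_cl ^ i +
          ∑ j ∈ Finset.Icc 1 (2 ^ i * w0 - 1),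
            p * ((2 : ℝ) ^ i * (w0 : ℝ) - (j : ℝ)) * p_cl ^ i /
              (((2 : ℝ) ^ i * (w0 : ℝ)) * (1 - p_cl))) =
      1 - p * (4 * p_cl ^ 2 - ((w0 : ℝ) + 4) * p_cl + (w0 : ℝ) + 1) /
        (2 * (1 - p_cl) ^ 2 * (1 - 2 * p_cl)) := by
  have hmass := hasSum_backoff_mass p p_cl hcl0.le hcl2 (Nat.one_le_iff_ne_zero.mp hw0)
  exact ⟨hmass, by rw [hmass.tsum_eq]⟩
end

section
/- Let 0 < p < 1 and 0 < β < 1 be real numbers. Let X and T be independent random variables on a probability space, each taking values in the positive integers, with P(X = j) = p·(1 − p)^{j−1} and P(T = j) = β·(1 − β)^{j−1} for j = 1, 2, …. Then E[X·max(0, T − X)] = p·(1 − β) / (β·(1 − (1 − p)·(1 − β))²). -/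
/-!
Condition on `X = i`. The conditional mean excess `E[(T - i)⁺]` of a geometric `T` is
`(1 - β)^i / β` (memorylessness: `T` exceeds `i` with probability `(1 - β)^i`, and then
overshoots by a fresh geometric of mean `1 / β`). Averaging `i (1 - β)^i / β` against the law of
`X` leaves the series `∑ i s^(i-1) = 1 / (1 - s)^2` with `s = (1 - p)(1 - β)`.
-/

open MeasureTheory ProbabilityTheory

lemma hasSum_succ_mul_geometric {𝕜 : Type*} [NormedField 𝕜] [CompleteSpace 𝕜] {r : 𝕜}
    (hr : ‖r‖ < 1) : HasSum (fun n : ℕ => ((n : 𝕜) + 1) * r ^ n) (1 / (1 - r) ^ 2) := by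
  simpa using hasSum_choose_mul_geometric_of_norm_lt_one 1 hr

lemma hasSum_coe_mul_pow_pred {𝕜 : Type*} [NormedField 𝕜] [CompleteSpace 𝕜] {r : 𝕜}
    (hr : ‖r‖ < 1) : HasSum (fun n : ℕ => (n : 𝕜) * r ^ (n - 1)) (1 / (1 - r) ^ 2) := by
  rw [← hasSum_nat_add_iff' 1]
  simpa using hasSum_succ_mul_geometric hr

lemma hasSum_posPart_sub_mul_geometric {β : ℝ} (hβ0 : 0 < β) (hβ1 : β ≤ 1) (i : ℕ) :
    HasSum (fun j : ℕ => max 0 ((j : ℝ) - i) * (β * (1 - β) ^ (j - 1))) ((1 - β) ^ i / β) := by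
  have hr : ‖1 - β‖ < 1 := by rw [Real.norm_eq_abs, abs_lt]; constructor <;> linarith
  rw [← hasSum_nat_add_iff' (i + 1)]
  have hhead : ∑ j ∈ Finset.range (i + 1), max 0 ((j : ℝ) - i) * (β * (1 - β) ^ (j - 1)) = 0 := by
    refine Finset.sum_eq_zero fun j hj => ?_
    have hji : (j : ℝ) ≤ i := by exact_mod_cast Nat.lt_succ_iff.mp (Finset.mem_range.mp hj)
    rw [max_eq_left (by linarith), zero_mul]
  have htail : ∀ n : ℕ, max 0 (((n + (i + 1) : ℕ) : ℝ) - i) * (β * (1 - β) ^ (n + (i + 1) - 1))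
      = β * (1 - β) ^ i * (((n : ℝ) + 1) * (1 - β) ^ n) := by
    intro n
    have hexcess : ((n + (i + 1) : ℕ) : ℝ) - i = n + 1 := by push_cast; ring
    rw [show n + (i + 1) - 1 = n + i by omega, hexcess, max_eq_right (by positivity), pow_add]
    ring
  have hvalue : (1 - β) ^ i / β = β * (1 - β) ^ i * (1 / (1 - (1 - β)) ^ 2) := by
    rw [sub_sub_cancel]
    field_simp
  rw [hhead, sub_zero, hvalue]
  simp_rw [htail]
  exact (hasSum_succ_mul_geometric hr).mul_left _

lemma hasSum_prod_of_nonneg {α β : Type*} {f : α × β → ℝ} {g : α → ℝ} {a : ℝ} (hf : 0 ≤ f)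
    (hrow : ∀ x, HasSum (fun y => f (x, y)) (g x)) (hg : HasSum g a) : HasSum f a := by
  have hsum : Summable f := (summable_prod_of_nonneg hf).2
    ⟨fun x => (hrow x).summable, by simpa only [(hrow _).tsum_eq] using hg.summable⟩
  rw [hsum.hasSum_iff, hsum.tsum_prod' fun x => (hrow x).summable]
  simpa only [(hrow _).tsum_eq] using hg.tsum_eq

theorem ProbabilityTheory.IndepFun.integral_comp_eq_of_hasSum {Ω α β : Type*} [MeasurableSpace Ω]
    {P : Measure Ω} [IsFiniteMeasure P] [MeasurableSpace α] [Countable α]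
    [MeasurableSingletonClass α] [MeasurableSpace β] [Countable β] [MeasurableSingletonClass β]
    {X : Ω → α} {Y : Ω → β} (hX : Measurable X) (hY : Measurable Y) (hXY : IndepFun X Y P)
    {g : α → β → ℝ} (hg : ∀ a b, 0 ≤ g a b) {s : ℝ}
    (hs : HasSum (fun ab : α × β => g ab.1 ab.2 * (P.real (X ⁻¹' {ab.1}) * P.real (Y ⁻¹' {ab.2})))
      s) :
    ∫ ω, g (X ω) (Y ω) ∂P = s := by
  have hXY_meas : Measurable fun ω => (X ω, Y ω) := hX.prodMk hY
  have hg_meas : Measurable fun ab : α × β => g ab.1 ab.2 := measurable_of_countable _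
  have hmass : ∀ ab : α × β, P.map (fun ω => (X ω, Y ω)) {ab}
      = ENNReal.ofReal (P.real (X ⁻¹' {ab.1}) * P.real (Y ⁻¹' {ab.2})) := by
    rintro ⟨a, b⟩
    have hpre : (fun ω => (X ω, Y ω)) ⁻¹' {(a, b)} = X ⁻¹' {a} ∩ Y ⁻¹' {b} := by
      ext ω; simp [Prod.ext_iff]
    rw [Measure.map_apply hXY_meas (measurableSet_singleton _), hpre,
      hXY.measure_inter_preimage_eq_mul _ _ (measurableSet_singleton a) (measurableSet_singleton b),
      ENNReal.ofReal_mul measureReal_nonneg, ofReal_measureReal, ofReal_measureReal]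
  have hterm_nonneg : ∀ ab : α × β,
      0 ≤ g ab.1 ab.2 * (P.real (X ⁻¹' {ab.1}) * P.real (Y ⁻¹' {ab.2})) :=
    fun ab => mul_nonneg (hg _ _) (mul_nonneg measureReal_nonneg measureReal_nonneg)
  rw [integral_eq_lintegral_of_nonneg_ae (ae_of_all _ fun ω => hg _ _)
      (hg_meas.comp hXY_meas).aestronglyMeasurable,
    ← lintegral_map (f := fun ab : α × β => ENNReal.ofReal (g ab.1 ab.2))
      (measurable_of_countable _) hXY_meas,
    lintegral_countable']
  simp_rw [hmass, ← ENNReal.ofReal_mul (hg _ _)]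
  rw [← ENNReal.ofReal_tsum_of_nonneg hterm_nonneg hs.summable, hs.tsum_eq,
    ENNReal.toReal_ofReal (hs.nonneg hterm_nonneg)]

lemma hasSum_geometric_waiting_cross_moment {p β : ℝ} (hp0 : 0 < p) (hp1 : p ≤ 1) (hβ0 : 0 < β)
    (hβ1 : β ≤ 1) :
    HasSum (fun ij : ℕ × ℕ => ij.1 * (p * (1 - p) ^ (ij.1 - 1)) *
        (max 0 ((ij.2 : ℝ) - ij.1) * (β * (1 - β) ^ (ij.2 - 1))))
      (p * (1 - β) / (β * (1 - (1 - p) * (1 - β)) ^ 2)) := by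
  have hq : 0 ≤ 1 - p := by linarith
  have hr : 0 ≤ 1 - β := by linarith
  have hs : ‖(1 - p) * (1 - β)‖ < 1 := by
    rw [Real.norm_eq_abs, abs_lt]; constructor <;> nlinarith
  have hrow : ∀ i : ℕ, HasSum
      (fun j : ℕ => i * (p * (1 - p) ^ (i - 1)) * (max 0 ((j : ℝ) - i) * (β * (1 - β) ^ (j - 1))))
      (i * (p * (1 - p) ^ (i - 1)) * ((1 - β) ^ i / β)) :=
    fun i => (hasSum_posPart_sub_mul_geometric hβ0 hβ1 i).mul_left _
  have hcol : HasSum (fun i : ℕ => i * (p * (1 - p) ^ (i - 1)) * ((1 - β) ^ i / β))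
      (p * (1 - β) / (β * (1 - (1 - p) * (1 - β)) ^ 2)) := by
    rw [← mul_one (p * (1 - β)), ← div_mul_div_comm]
    refine ((hasSum_coe_mul_pow_pred hs).mul_left _).congr_fun fun i => ?_
    rcases i with _ | i
    · simp
    · simp only [Nat.add_sub_cancel, pow_succ, mul_pow]
      field_simp
  exact hasSum_prod_of_nonneg (fun ij => by positivity) hrow hcol

theorem geometric_waiting_cross_moment_general
    {Ω : Type*} [MeasurableSpace Ω] (P : Measure Ω) [IsProbabilityMeasure P]
    (p β : ℝ) (hp0 : 0 < p) (hp1 : p < 1) (hβ0 : 0 < β) (hβ1 : β < 1)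
    (X T : Ω → ℕ) (hX : Measurable X) (hT : Measurable T)
    (hind : IndepFun X T P)
    (hXdist : ∀ j : ℕ, 1 ≤ j →
      P {ω | X ω = j} = ENNReal.ofReal (p * (1 - p) ^ (j - 1)))
    (hTdist : ∀ j : ℕ, 1 ≤ j →
      P {ω | T ω = j} = ENNReal.ofReal (β * (1 - β) ^ (j - 1))) :
    ∫ ω, (X ω : ℝ) * max 0 ((T ω : ℝ) - (X ω : ℝ)) ∂P =
      p * (1 - β) / (β * (1 - (1 - p) * (1 - β)) ^ 2) := by
  have hXpmf (i : ℕ) (hi : 1 ≤ i) : P.real (X ⁻¹' {i}) = p * (1 - p) ^ (i - 1) :=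
    (congrArg ENNReal.toReal (hXdist i hi)).trans
      (ENNReal.toReal_ofReal (mul_nonneg hp0.le (pow_nonneg (by linarith) _)))
  have hTpmf (j : ℕ) (hj : 1 ≤ j) : P.real (T ⁻¹' {j}) = β * (1 - β) ^ (j - 1) :=
    (congrArg ENNReal.toReal (hTdist j hj)).trans
      (ENNReal.toReal_ofReal (mul_nonneg hβ0.le (pow_nonneg (by linarith) _)))
  refine hind.integral_comp_eq_of_hasSum hX hT (g := fun i j => (i : ℝ) * max 0 ((j : ℝ) - i))
    (fun i j => mul_nonneg i.cast_nonneg (le_max_left _ _))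
    ((hasSum_geometric_waiting_cross_moment hp0 hp1.le hβ0 hβ1.le).congr_fun ?_)
  -- The summand vanishes at `i = 0` and at `j = 0`, where the point masses are not prescribed.
  rintro ⟨i, j⟩
  rcases Nat.eq_zero_or_pos i with rfl | hi
  · simp
  rcases Nat.eq_zero_or_pos j with rfl | hj
  · simp
  rw [hXpmf i hi, hTpmf j hj]
  ring

/-- E[X_k·W_k] for the Geom/Geom/1 queue: if `X` and `T` are independent,
geometric on the positive integers with parameters `p` and `β` respectively,
then `E[X·max(0, T − X)] = p·(1 − β)/(β·(1 − (1 − p)·(1 − β))²)`. -/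
theorem geometric_waiting_cross_moment
    {Ω : Type*} [MeasurableSpace Ω] (P : Measure Ω) [IsProbabilityMeasure P]
    (p β : ℝ) (hp0 : 0 < p) (hp1 : p < 1) (hβ0 : 0 < β) (hβ1 : β < 1)
    (X T : Ω → ℕ) (hX : Measurable X) (hT : Measurable T)
    (hind : IndepFun X T P)
    (hXpos : ∀ ω, 1 ≤ X ω) (hTpos : ∀ ω, 1 ≤ T ω)
    (hXdist : ∀ j : ℕ, 1 ≤ j →
      P {ω | X ω = j} = ENNReal.ofReal (p * (1 - p) ^ (j - 1)))
    (hTdist : ∀ j : ℕ, 1 ≤ j →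
      P {ω | T ω = j} = ENNReal.ofReal (β * (1 - β) ^ (j - 1))) :
    ∫ ω, (X ω : ℝ) * max 0 ((T ω : ℝ) - (X ω : ℝ)) ∂P =
      p * (1 - β) / (β * (1 - (1 - p) * (1 - β)) ^ 2) :=
  geometric_waiting_cross_moment_general P p β hp0 hp1 hβ0 hβ1 X T hX hT hind hXdist hTdist
end
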